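/- (Algebraic Kolmogorov theorem.) Let G = (V, E) be a finite connected simple graph and D = (V, A) the associated directed graph with both arcs on each edge. Let P : A → ℝ satisfy P_a ≠ 0 for every a ∈ A. Then P^ω = P^{r(ω)} for every closed path ω in D (where P^ω is the product of the values P_a along the arcs of ω) if and only if there exists κ : V → ℝ with κ(v) ≠ 0 for all v such that κ(v) P_{v→w} = κ(w) P_{w→v} for every arc (v→w) ∈ A. -/

import Mathlib

/-!
If `κ` balances `P`, then `P v w = κ w * P w v / κ v` on every arc and the `κ`-factors telescope
around a cycle. Conversely, applying the cycle condition to `p` followed by the reverse of `q`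
shows that the ratio of the forward to the backward product of `P` along a walk depends only on
its endpoints; fixing a root `r`, this ratio along any walk from `r` to `v` is the required `κ v`.
-/

open Function

namespace SimpleGraph.Walk

variable {V M : Type*} {G : SimpleGraph V}

def dartProd [CommMonoid M] (P : V → V → M) {u v : V} (p : G.Walk u v) : M :=
  (p.darts.map fun d => P d.fst d.snd).prod

section CommMonoid

variable [CommMonoid M] (P : V → V → M)

@[simp]
lemma dartProd_nil {u : V} : (nil : G.Walk u u).dartProd P = 1 := rfl

@[simp]
lemma dartProd_cons {u v w : V} (h : G.Adj u v) (p : G.Walk v w) :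
    (cons h p).dartProd P = P u v * p.dartProd P := rfl

lemma dartProd_append {u v w : V} (p : G.Walk u v) (q : G.Walk v w) :
    (p.append q).dartProd P = p.dartProd P * q.dartProd P := by
  simp [dartProd, darts_append]

lemma dartProd_reverse {u v : V} (p : G.Walk u v) :
    p.reverse.dartProd P = p.dartProd (swap P) := by
  simp [dartProd, darts_reverse, List.prod_reverse, Function.comp_def]

lemma dartProd_eq_prod_getVert {u v : V} (p : G.Walk u v) :
    p.dartProd P = ∏ i : Fin p.length, P (p.getVert i) (p.getVert (i + 1)) := by
  induction p with
  | nil => rfl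
  | cons h q ih =>
    rw [length_cons, Fin.prod_univ_succ]
    simp [ih]

end CommMonoid

lemma dartProd_ne_zero [CommMonoidWithZero M] [NoZeroDivisors M] [Nontrivial M]
    {P : V → V → M} (hP : ∀ v w, G.Adj v w → P v w ≠ 0) {u v : V} (p : G.Walk u v) :
    p.dartProd P ≠ 0 :=
  List.prod_ne_zero <| by
    simp only [List.mem_map, not_exists, not_and]
    exact fun d _ => hP _ _ d.adj

-- Addition in `Fin (n + 1)` wraps around, which is harmless on a closed walk of length `n + 1`.
lemma getVert_val_add_one_of_length_eq {u : V} {n : ℕ} (c : G.Walk u u) (hc : c.length = n + 1)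
    (i : Fin (n + 1)) : c.getVert ↑(i + 1) = c.getVert (i + 1) := by
  rcases Fin.eq_castSucc_or_eq_last i with ⟨j, rfl⟩ | rfl
  · rw [Fin.coeSucc_eq_succ, Fin.val_succ, Fin.val_castSucc]
  · rw [Fin.last_add_one, Fin.val_zero, Fin.val_last, ← hc, getVert_length, getVert_zero]

lemma dartProd_eq_dartProd_swap_of_cycle [CommMonoid M] {P : V → V → M}
    (hcyc : ∀ (n : ℕ) (ω : Fin (n + 1) → V), (∀ i, G.Adj (ω i) (ω (i + 1))) →
      (∏ i, P (ω i) (ω (i + 1))) = ∏ i, P (ω (i + 1)) (ω i))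
    {u : V} (c : G.Walk u u) : c.dartProd P = c.dartProd (swap P) := by
  cases c with
  | nil => rfl
  | cons h q =>
    have hsucc := getVert_val_add_one_of_length_eq (cons h q) rfl
    have hadj (i : Fin (q.length + 1)) :
        G.Adj ((cons h q).getVert i) ((cons h q).getVert ↑(i + 1)) :=
      hsucc i ▸ (cons h q).adj_getVert_succ i.isLt
    have h := hcyc _ _ hadj
    simp only [hsucc] at h
    rw [dartProd_eq_prod_getVert, dartProd_eq_prod_getVert]
    exact h

lemma dartProd_mul_dartProd_swap_comm [CommMonoid M] {P : V → V → M}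
    (hclosed : ∀ (u : V) (c : G.Walk u u), c.dartProd P = c.dartProd (swap P))
    {u v : V} (p q : G.Walk u v) :
    p.dartProd P * q.dartProd (swap P) = q.dartProd P * p.dartProd (swap P) := by
  have h := hclosed u (p.append q.reverse)
  rw [dartProd_append, dartProd_append, dartProd_reverse, dartProd_reverse] at h
  rw [h]
  exact mul_comm _ _

end SimpleGraph.Walk

namespace SimpleGraph

variable {V M K : Type*} {G : SimpleGraph V}

open Walk in
theorem Connected.exists_detailedBalance_of_dartProd_eq_swap [CommGroupWithZero K]
    (hG : G.Connected) {P : V → V → K}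
    (hP : ∀ v w, G.Adj v w → P v w ≠ 0)
    (hclosed : ∀ (u : V) (c : G.Walk u u), c.dartProd P = c.dartProd (swap P)) :
    ∃ κ : V → K, (∀ v, κ v ≠ 0) ∧ ∀ v w, G.Adj v w → κ v * P v w = κ w * P w v := by
  obtain ⟨r⟩ := hG.nonempty
  let p (v : V) : G.Walk r v := (hG.preconnected r v).some
  have hPswap : ∀ v w, G.Adj v w → swap P v w ≠ 0 := fun v w h => hP w v h.symm
  refine ⟨fun v => (p v).dartProd P / (p v).dartProd (swap P),
    fun v => div_ne_zero (dartProd_ne_zero hP _) (dartProd_ne_zero hPswap _), fun v w hvw => ?_⟩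
  have h := dartProd_mul_dartProd_swap_comm hclosed (p w) ((p v).append (cons hvw nil))
  simp only [dartProd_append, dartProd_cons, dartProd_nil, swap, mul_one] at h
  have hv := dartProd_ne_zero hPswap (p v)
  have hw := dartProd_ne_zero hPswap (p w)
  rw [div_mul_eq_mul_div, div_mul_eq_mul_div, div_eq_div_iff hv hw, ← h]
  ac_rfl

theorem prod_cycle_eq_prod_reverse_of_detailedBalance
    [CommMonoidWithZero M] [IsCancelMulZero M] [Nontrivial M]
    {P : V → V → M} {κ : V → M} (hκ : ∀ v, κ v ≠ 0)
    (hbal : ∀ v w, G.Adj v w → κ v * P v w = κ w * P w v)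
    {n : ℕ} (ω : Fin (n + 1) → V) (hω : ∀ i, G.Adj (ω i) (ω (i + 1))) :
    ∏ i, P (ω i) (ω (i + 1)) = ∏ i, P (ω (i + 1)) (ω i) := by
  have hrot : ∏ i, κ (ω (i + 1)) = ∏ i, κ (ω i) :=
    Fintype.prod_equiv (Equiv.addRight 1) _ _ fun _ => rfl
  have hκω : ∏ i, κ (ω i) ≠ 0 := Finset.prod_ne_zero_iff.mpr fun i _ => hκ (ω i)
  refine mul_left_cancel₀ hκω ?_
  calc (∏ i, κ (ω i)) * ∏ i, P (ω i) (ω (i + 1))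
      = ∏ i, κ (ω (i + 1)) * P (ω (i + 1)) (ω i) := by
        rw [← Finset.prod_mul_distrib]
        exact Finset.prod_congr rfl fun i _ => hbal _ _ (hω i)
    _ = (∏ i, κ (ω i)) * ∏ i, P (ω (i + 1)) (ω i) := by
        rw [Finset.prod_mul_distrib, hrot]

end SimpleGraph

theorem stmt_16 {V : Type*}
    (G : SimpleGraph V) (hG : G.Connected)
    (P : V → V → ℝ) (hP : ∀ v w, G.Adj v w → P v w ≠ 0) :
    (∀ (n : ℕ) (ω : Fin (n + 1) → V), (∀ i, G.Adj (ω i) (ω (i + 1))) →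
      (∏ i, P (ω i) (ω (i + 1))) = ∏ i, P (ω (i + 1)) (ω i)) ↔
    (∃ κ : V → ℝ, (∀ v, κ v ≠ 0) ∧
      ∀ v w, G.Adj v w → κ v * P v w = κ w * P w v) :=
  ⟨fun hcyc => hG.exists_detailedBalance_of_dartProd_eq_swap hP fun _ =>
      SimpleGraph.Walk.dartProd_eq_dartProd_swap_of_cycle hcyc,
    fun ⟨_, hκ, hbal⟩ _ => SimpleGraph.prod_cycle_eq_prod_reverse_of_detailedBalance hκ hbal⟩
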